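/- arXiv:1412.3392 — 3 statements merged into one kernel-verified Lean document; each statement's English description precedes it below -/
import Mathlib

section
/- Let n ≥ 1, s ∈ (0,1) and p ∈ [1,∞) be such that sp < n, and let q ∈ [p, p_s^*] where p_s^* = np/(n−sp). Then there exists a constant C > 0 such that for every u ∈ L^p(ℝ^n) with finite Gagliardo seminorm [u]_{s,p}, one has u ∈ L^q(ℝ^n) and ‖u‖_{L^q(ℝ^n)} ≤ C (‖u‖_{L^p(ℝ^n)}^p + [u]_{s,p}^p)^{1/p}. -/
open MeasureTheory Real Filter
open scoped ENNReal NNReal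

noncomputable section

/-- The `p`-th power of the Gagliardo seminorm, as an extended nonnegative real. -/
def gagliardoP (n : ℕ) (s p : ℝ) (u : EuclideanSpace ℝ (Fin n) → ℝ) : ℝ≥0∞ :=
  ∫⁻ x, ∫⁻ y, ENNReal.ofReal (|u x - u y| ^ p / ‖x - y‖ ^ ((n : ℝ) + s * p))

/-- Membership in the fractional Sobolev space with potential `X^s`. -/
def MemXs (n : ℕ) (s p : ℝ) (V : EuclideanSpace ℝ (Fin n) → ℝ)
    (u : EuclideanSpace ℝ (Fin n) → ℝ) : Prop :=
  Measurable u ∧ MemLp u (ENNReal.ofReal p) ∧ gagliardoP n s p u < ⊤ ∧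
    Integrable (fun x => V x * |u x| ^ p)

/-- The norm of `X^s`. -/
def normXs (n : ℕ) (s p : ℝ) (V : EuclideanSpace ℝ (Fin n) → ℝ)
    (u : EuclideanSpace ℝ (Fin n) → ℝ) : ℝ :=
  ((gagliardoP n s p u).toReal + ∫ x, V x * |u x| ^ p) ^ (1 / p)

/-- The pairing `⟨A(u), v⟩` associated with the fractional `p`-Laplacian plus potential. -/
def Apair (n : ℕ) (s p : ℝ) (V : EuclideanSpace ℝ (Fin n) → ℝ)
    (u v : EuclideanSpace ℝ (Fin n) → ℝ) : ℝ :=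
  (∫ x, ∫ y, |u x - u y| ^ (p - 2) * (u x - u y) * (v x - v y) / ‖x - y‖ ^ ((n : ℝ) + s * p)) +
    ∫ x, V x * |u x| ^ (p - 2) * u x * v x

/-- The primitive `F(x,t) = ∫_0^t f(x,τ) dτ`. -/
def Fprim (n : ℕ) (f : EuclideanSpace ℝ (Fin n) → ℝ → ℝ)
    (x : EuclideanSpace ℝ (Fin n)) (t : ℝ) : ℝ :=
  ∫ τ in (0:ℝ)..t, f x τ

/-- The energy functional `I`. -/
def energy (n : ℕ) (s p : ℝ) (V : EuclideanSpace ℝ (Fin n) → ℝ)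
    (f : EuclideanSpace ℝ (Fin n) → ℝ → ℝ) (u : EuclideanSpace ℝ (Fin n) → ℝ) : ℝ :=
  (1 / p) * normXs n s p V u ^ p - ∫ x, Fprim n f x (u x)

/-- Condition (V) on the potential. -/
def CondV (n : ℕ) (V : EuclideanSpace ℝ (Fin n) → ℝ) : Prop :=
  Continuous V ∧ (∃ V₀ > (0:ℝ), ∀ x, V₀ ≤ V x) ∧
    ∀ M > (0:ℝ), volume {x : EuclideanSpace ℝ (Fin n) | V x ≤ M} < ⊤

/-- Condition (f1): continuity, growth strictly below `|t|^{q-1}`, and `p`-superlinearity,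
both uniformly in `x`. -/
def CondF1 (n : ℕ) (p q : ℝ) (f : EuclideanSpace ℝ (Fin n) → ℝ → ℝ) : Prop :=
  Continuous (Function.uncurry f) ∧
    (∀ ε > (0:ℝ), ∃ T > (0:ℝ), ∀ x t, T ≤ |t| → |f x t| ≤ ε * |t| ^ (q - 1)) ∧
    (∀ L : ℝ, ∃ T > (0:ℝ), ∀ x t, T ≤ |t| → L * |t| ^ p ≤ f x t * t)

/-- Condition (f2): `f(x,t) = o(|t|^{p-2} t)` as `t → 0`, uniformly in `x`. -/
def CondF2 (n : ℕ) (p : ℝ) (f : EuclideanSpace ℝ (Fin n) → ℝ → ℝ) : Prop :=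
  ∀ ε > (0:ℝ), ∃ δ > (0:ℝ), ∀ x t, t ≠ 0 → |t| < δ → |f x t| ≤ ε * |t| ^ (p - 1)

/-- The function `𝓕(x,t) = f(x,t) t − p F(x,t)`. -/
def calF (n : ℕ) (p : ℝ) (f : EuclideanSpace ℝ (Fin n) → ℝ → ℝ)
    (x : EuclideanSpace ℝ (Fin n)) (t : ℝ) : ℝ :=
  f x t * t - p * Fprim n f x t

/-- Condition (f3). -/
def CondF3 (n : ℕ) (p : ℝ) (f : EuclideanSpace ℝ (Fin n) → ℝ → ℝ) : Prop :=
  ∃ θ : ℝ, 1 ≤ θ ∧ ∀ x t, ∀ σ ∈ Set.Icc (0:ℝ) 1,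
    calF n p f x (σ * t) ≤ θ * calF n p f x t

end

/-!
Level-set argument. For a set `F` of finite measure in a `d`-dimensional space, the ball around
`x` of measure `2 |F|` has at least half of its measure outside `F`, so
`∫_{Fᶜ} ‖x - y‖^{-(d + sp)} dy ≥ κ |F|^{-sp/d}`. Taking `F = {|u| ≥ t}` at points where
`|u| ≥ 2t` shows that the inner Gagliardo integral dominates `κ t^p |{|u| ≥ t}|^{-θ}`,
`θ = sp/d`. For `u` with `‖u‖_p, [u]_{s,p} ≤ 1`, integrating over `{|u| ≥ 2t}` gives the
recursion `m(2t) ≤ (2^r/κ) m(t)^θ` for `m(t) = t^r |{|u| ≥ t}|`, `r = p_s^*`, so `m` is bounded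
on the levels `t = 2^{j-1}`. Charging each dyadic shell `{2^j ≤ |u| < 2^{j+1}}` to the Gagliardo
energy of its points then bounds `∫ |u|^r`. The range `q ∈ [p, r]` follows from
`|u|^q ≤ |u|^p + |u|^r`, and homogeneity removes the normalization.
-/

open Set Metric Module

theorem ENNReal.le_max_rpow_of_forall_succ_le_mul_rpow {b : ℕ → ℝ≥0∞} {A : ℝ≥0∞} {θ : ℝ}
    (hθ0 : 0 ≤ θ) (hθ1 : θ < 1) (hb : ∀ j, b (j + 1) ≤ A * b j ^ θ) (j : ℕ) :
    b j ≤ max (b 0) (A ^ (1 / (1 - θ))) := by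
  set B := max (b 0) (A ^ (1 / (1 - θ)))
  have hB : A * B ^ θ ≤ B := by
    rcases eq_or_ne B 0 with hB0 | hB0
    · have hA : A = 0 := by
        have hA : A ^ (1 / (1 - θ)) ≤ 0 := hB0 ▸ le_max_right (b 0) _
        rcases ENNReal.rpow_eq_zero_iff.1 (nonpos_iff_eq_zero.1 hA) with ⟨hA, -⟩ | ⟨-, hneg⟩
        · exact hA
        · exact absurd hneg (one_div_pos.2 (sub_pos.2 hθ1)).not_gt
      simp [hA]
    rcases eq_or_ne B ⊤ with hBtop | hBtop
    · simp [hBtop]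
    have hA : A ≤ B ^ (1 - θ) := by
      have h := ENNReal.rpow_le_rpow (le_max_right (b 0) (A ^ (1 / (1 - θ))))
        (by linarith : 0 ≤ 1 - θ)
      rwa [← ENNReal.rpow_mul, one_div_mul_cancel (by linarith), ENNReal.rpow_one] at h
    calc A * B ^ θ ≤ B ^ (1 - θ) * B ^ θ := by gcongr
      _ = B := by rw [← ENNReal.rpow_add _ _ hB0 hBtop, sub_add_cancel, ENNReal.rpow_one]
  induction j with
  | zero => exact le_max_left _ _
  | succ j ih => exact (hb j).trans (le_trans (by gcongr) hB)

theorem iUnion_Ico_two_pow : ⋃ j : ℕ, Ico ((2 : ℝ) ^ j) (2 ^ (j + 1)) = Ici 1 :=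
  iUnion_Ico_map_succ_eq_Ici (f := fun j : ℕ => (2 : ℝ) ^ j) (fun _ => one_le_pow₀ one_le_two)
    (not_bddAbove_iff.2 fun M =>
      let ⟨j, hj⟩ := pow_unbounded_of_one_lt M one_lt_two; ⟨_, ⟨j, rfl⟩, hj⟩)

namespace FractionalSobolev

section LevelSets

variable {X : Type*} [MeasurableSpace X] {μ : Measure X} {u : X → ℝ} {I : X → ℝ≥0∞}
  {p r θ c t : ℝ}

/-- `I x` plays the role of the inner Gagliardo integral `∫ |u x - u y|^p / ‖x - y‖^(d + sp) dy`,
and `θ` of `sp / d`. When a level set has measure `0` or `⊤`, the junk value `0 ^ (-θ) = 0` makes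
the condition trivial at that level. -/
def ControlsLevelSets (μ : Measure X) (p θ c : ℝ) (u : X → ℝ) (I : X → ℝ≥0∞) : Prop :=
  ∀ t > 0, ∀ x, 2 * t ≤ |u x| →
    ENNReal.ofReal (c * t ^ p * (μ {y | t ≤ |u y|}).toReal ^ (-θ)) ≤ I x

theorem ofReal_rpow_mul_measure_le_lintegral (hu : Measurable u) (hp : 0 ≤ p) (ht : 0 ≤ t) :
    ENNReal.ofReal (t ^ p) * μ {x | t ≤ |u x|} ≤ ∫⁻ x, ENNReal.ofReal (|u x| ^ p) ∂μ := by
  refine le_trans ?_ (mul_meas_ge_le_lintegral₀ (by fun_prop) (ENNReal.ofReal (t ^ p)))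
  gcongr with x
  exact fun hx => ENNReal.ofReal_le_ofReal (rpow_le_rpow ht hx hp)

theorem measure_setOf_le_abs_ne_top (hu : Measurable u) (hp : 0 ≤ p) (ht : 0 < t)
    (hP : ∫⁻ x, ENNReal.ofReal (|u x| ^ p) ∂μ ≠ ⊤) : μ {x | t ≤ |u x|} ≠ ⊤ :=
  (ENNReal.lt_top_of_mul_ne_top_right
    (ne_top_of_le_ne_top hP (ofReal_rpow_mul_measure_le_lintegral hu hp ht.le))
    (by simpa using rpow_pos_of_pos ht p)).ne

theorem mul_rpow_eq_rpow_mul_mul {v : ℝ} (hr : r * (1 - θ) = p) (ht : 0 < t) (hv : 0 < v) :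
    c * t ^ r = (t ^ r * v) ^ θ * (c * t ^ p * v ^ (-θ)) := by
  have htr : t ^ r = t ^ (r * θ) * t ^ p := by rw [← rpow_add ht, ← hr]; ring_nf
  rw [mul_rpow (by positivity) hv.le, ← rpow_mul ht.le, rpow_neg hv.le, htr]
  field_simp

theorem ofReal_mul_rpow_mul_measure_eq (hθ : 0 ≤ θ) (hr : r * (1 - θ) = p) (ht : 0 < t)
    (hm : μ {x | t ≤ |u x|} ≠ ⊤) {S : Set X} (hS : S ⊆ {x | t ≤ |u x|}) :
    ENNReal.ofReal (c * t ^ r) * μ S =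
      (ENNReal.ofReal (t ^ r) * μ {x | t ≤ |u x|}) ^ θ *
        (ENNReal.ofReal (c * t ^ p * (μ {x | t ≤ |u x|}).toReal ^ (-θ)) * μ S) := by
  rcases eq_or_ne (μ {x | t ≤ |u x|}) 0 with hm0 | hm0
  · simp [measure_mono_null hS hm0]
  have hv : 0 < (μ {x | t ≤ |u x|}).toReal := ENNReal.toReal_pos hm0 hm
  rw [← ENNReal.ofReal_toReal hm, ENNReal.toReal_ofReal hv.le, ← ENNReal.ofReal_mul (by positivity),
    ENNReal.ofReal_rpow_of_nonneg (by positivity) hθ, ← mul_assoc,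
    ← ENNReal.ofReal_mul (by positivity), ← mul_rpow_eq_rpow_mul_mul hr ht hv]

theorem ofReal_mul_measure_le_setLIntegral (hI : ControlsLevelSets μ p θ c u I) (ht : 0 < t)
    {S : Set X} (hS : MeasurableSet S) (hSu : S ⊆ {x | 2 * t ≤ |u x|}) :
    ENNReal.ofReal (c * t ^ p * (μ {x | t ≤ |u x|}).toReal ^ (-θ)) * μ S ≤
      ∫⁻ x in S, I x ∂μ := by
  rw [← setLIntegral_const]
  exact setLIntegral_mono' hS fun x hx => hI t ht x (hSu hx)

theorem ofReal_rpow_mul_measure_two_mul_le (hI : ControlsLevelSets μ p θ c u I)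
    (hIint : ∫⁻ x, I x ∂μ ≤ 1) (hu : Measurable u) (hc : 0 < c) (hθ : 0 ≤ θ)
    (hr : r * (1 - θ) = p) (ht : 0 < t) (hm : μ {x | t ≤ |u x|} ≠ ⊤) :
    ENNReal.ofReal ((2 * t) ^ r) * μ {x | 2 * t ≤ |u x|} ≤
      ENNReal.ofReal (2 ^ r / c) * (ENNReal.ofReal (t ^ r) * μ {x | t ≤ |u x|}) ^ θ := by
  have hS : {x | 2 * t ≤ |u x|} ⊆ {x | t ≤ |u x|} := fun x (hx : 2 * t ≤ |u x|) =>
    show t ≤ |u x| by linarith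
  have hweight := (ofReal_mul_measure_le_setLIntegral hI ht
    (measurableSet_le measurable_const hu.abs) subset_rfl).trans
    ((setLIntegral_le_lintegral _ _).trans hIint)
  calc ENNReal.ofReal ((2 * t) ^ r) * μ {x | 2 * t ≤ |u x|}
      = ENNReal.ofReal (2 ^ r / c) * (ENNReal.ofReal (c * t ^ r) * μ {x | 2 * t ≤ |u x|}) := by
        rw [← mul_assoc, ← ENNReal.ofReal_mul (by positivity), mul_rpow zero_le_two ht.le]
        field_simp
    _ ≤ ENNReal.ofReal (2 ^ r / c) * (ENNReal.ofReal (t ^ r) * μ {x | t ≤ |u x|}) ^ θ := by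
        rw [ofReal_mul_rpow_mul_measure_eq hθ hr ht hm hS]
        exact mul_le_mul_right (mul_le_of_le_one_right' hweight) _

theorem ofReal_rpow_mul_measure_le_max (hI : ControlsLevelSets μ p θ c u I)
    (hIint : ∫⁻ x, I x ∂μ ≤ 1) (hu : Measurable u) (hP : ∫⁻ x, ENNReal.ofReal (|u x| ^ p) ∂μ ≤ 1)
    (hp : 0 ≤ p) (hc : 0 < c) (hθ0 : 0 ≤ θ) (hθ1 : θ < 1) (hr : r * (1 - θ) = p) (j : ℕ) :
    ENNReal.ofReal ((2 ^ j / 2) ^ r) * μ {x | 2 ^ j / 2 ≤ |u x|} ≤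
      max 1 (ENNReal.ofReal (2 ^ r / c) ^ (1 / (1 - θ))) := by
  refine (ENNReal.le_max_rpow_of_forall_succ_le_mul_rpow
    (b := fun j => ENNReal.ofReal ((2 ^ j / 2) ^ r) * μ {x | 2 ^ j / 2 ≤ |u x|})
    hθ0 hθ1 (fun j => ?_) j).trans
    (max_le_max_right _ ?_)
  · rw [show (2 : ℝ) ^ (j + 1) / 2 = 2 * (2 ^ j / 2) by ring]
    exact ofReal_rpow_mul_measure_two_mul_le hI hIint hu hc hθ0 hr (by positivity)
      (measure_setOf_le_abs_ne_top hu hp (by positivity) (hP.trans_lt ENNReal.one_lt_top).ne)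
  · calc ENNReal.ofReal ((2 ^ 0 / 2) ^ r) * μ {x | 2 ^ 0 / 2 ≤ |u x|}
        ≤ ENNReal.ofReal ((2 ^ 0 / 2) ^ p) * μ {x | 2 ^ 0 / 2 ≤ |u x|} :=
          mul_le_mul_left (ENNReal.ofReal_le_ofReal
            (rpow_le_rpow_of_exponent_ge (by norm_num) (by norm_num) (by nlinarith))) _
      _ ≤ 1 := (ofReal_rpow_mul_measure_le_lintegral hu hp (by norm_num)).trans hP

theorem setLIntegral_Ico_rpow_le_of_controlsLevelSets (hI : ControlsLevelSets μ p θ c u I)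
    (hu : Measurable u) (hc : 0 < c) (hθ : 0 ≤ θ) (hr : r * (1 - θ) = p) (hr0 : 0 ≤ r)
    (ht : 0 < t) (hm : μ {x | t ≤ |u x|} ≠ ⊤) :
    ∫⁻ x in {x | |u x| ∈ Ico (2 * t) (4 * t)}, ENNReal.ofReal (|u x| ^ r) ∂μ ≤
      ENNReal.ofReal (4 ^ r / c) * (ENNReal.ofReal (t ^ r) * μ {x | t ≤ |u x|}) ^ θ *
        ∫⁻ x in {x | |u x| ∈ Ico (2 * t) (4 * t)}, I x ∂μ := by
  set S := {x | |u x| ∈ Ico (2 * t) (4 * t)}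
  have hS : MeasurableSet S := hu.abs measurableSet_Ico
  have hSt : S ⊆ {x | t ≤ |u x|} := fun x hx =>
    (le_mul_of_one_le_left ht.le one_le_two).trans (hx : |u x| ∈ Ico (2 * t) (4 * t)).1
  calc ∫⁻ x in S, ENNReal.ofReal (|u x| ^ r) ∂μ
      ≤ ∫⁻ x in S, ENNReal.ofReal ((4 * t) ^ r) ∂μ :=
        setLIntegral_mono' hS fun x hx =>
          ENNReal.ofReal_le_ofReal (rpow_le_rpow (abs_nonneg _) hx.2.le hr0)
    _ = ENNReal.ofReal (4 ^ r / c) * (ENNReal.ofReal (c * t ^ r) * μ S) := by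
        rw [setLIntegral_const, ← mul_assoc, ← ENNReal.ofReal_mul (by positivity),
          mul_rpow (by norm_num) ht.le]
        field_simp
    _ ≤ _ := by
        rw [ofReal_mul_rpow_mul_measure_eq hθ hr ht hm hSt, ← mul_assoc]
        gcongr
        exact ofReal_mul_measure_le_setLIntegral hI ht hS fun x hx => hx.1

theorem setLIntegral_one_le_abs_rpow_le_of_controlsLevelSets (hI : ControlsLevelSets μ p θ c u I)
    (hIint : ∫⁻ x, I x ∂μ ≤ 1) (hu : Measurable u) (hP : ∫⁻ x, ENNReal.ofReal (|u x| ^ p) ∂μ ≤ 1)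
    (hp : 0 ≤ p) (hc : 0 < c) (hθ0 : 0 ≤ θ) (hθ1 : θ < 1) (hr : r * (1 - θ) = p) :
    ∫⁻ x in {x | 1 ≤ |u x|}, ENNReal.ofReal (|u x| ^ r) ∂μ ≤
      ENNReal.ofReal (4 ^ r / c) * max 1 (ENNReal.ofReal (2 ^ r / c) ^ (1 / (1 - θ))) ^ θ := by
  set K := ENNReal.ofReal (4 ^ r / c) * max 1 (ENNReal.ofReal (2 ^ r / c) ^ (1 / (1 - θ))) ^ θ
  set U : ℕ → Set X := fun j => {x | |u x| ∈ Ico ((2 : ℝ) ^ j) (2 ^ (j + 1))}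
  have hU (j : ℕ) : MeasurableSet (U j) := hu.abs measurableSet_Ico
  have hUdisj : Pairwise (Function.onFun Disjoint U) := fun i j hij =>
    ((pow_right_mono₀ (one_le_two : (1 : ℝ) ≤ 2)).pairwise_disjoint_on_Ico_succ hij).preimage
      fun x => |u x|
  have hUunion : ⋃ j, U j = {x | 1 ≤ |u x|} := by
    ext x
    simpa [U] using congrArg (|u x| ∈ ·) iUnion_Ico_two_pow
  have hshell (j : ℕ) : ∫⁻ x in U j, ENNReal.ofReal (|u x| ^ r) ∂μ ≤ K * ∫⁻ x in U j, I x ∂μ := by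
    have h := setLIntegral_Ico_rpow_le_of_controlsLevelSets hI hu hc hθ0 hr (by nlinarith)
      (t := 2 ^ j / 2) (by positivity)
      (measure_setOf_le_abs_ne_top hu hp (by positivity) (hP.trans_lt ENNReal.one_lt_top).ne)
    rw [show 2 * ((2 : ℝ) ^ j / 2) = 2 ^ j by ring,
      show 4 * ((2 : ℝ) ^ j / 2) = 2 ^ (j + 1) by ring] at h
    exact h.trans (mul_le_mul_left (mul_le_mul_right (ENNReal.rpow_le_rpow
      (ofReal_rpow_mul_measure_le_max hI hIint hu hP hp hc hθ0 hθ1 hr j) hθ0) _) _)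
  calc ∫⁻ x in {x | 1 ≤ |u x|}, ENNReal.ofReal (|u x| ^ r) ∂μ
      = ∑' j, ∫⁻ x in U j, ENNReal.ofReal (|u x| ^ r) ∂μ := by
        rw [← hUunion, lintegral_iUnion hU hUdisj]
    _ ≤ ∑' j, K * ∫⁻ x in U j, I x ∂μ := ENNReal.tsum_le_tsum hshell
    _ = K * ∫⁻ x in ⋃ j, U j, I x ∂μ := by rw [ENNReal.tsum_mul_left, lintegral_iUnion hU hUdisj]
    _ ≤ K := mul_le_of_le_one_right' ((setLIntegral_le_lintegral _ _).trans hIint)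

theorem lintegral_rpow_le_of_controlsLevelSets (hI : ControlsLevelSets μ p θ c u I)
    (hIint : ∫⁻ x, I x ∂μ ≤ 1) (hu : Measurable u) (hP : ∫⁻ x, ENNReal.ofReal (|u x| ^ p) ∂μ ≤ 1)
    (hp : 0 ≤ p) (hc : 0 < c) (hθ0 : 0 ≤ θ) (hθ1 : θ < 1) (hr : r * (1 - θ) = p) :
    ∫⁻ x, ENNReal.ofReal (|u x| ^ r) ∂μ ≤
      1 + ENNReal.ofReal (4 ^ r / c) * max 1 (ENNReal.ofReal (2 ^ r / c) ^ (1 / (1 - θ))) ^ θ := by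
  have hone : MeasurableSet {x | 1 ≤ |u x|} := measurableSet_le measurable_const hu.abs
  have hsmall : ∫⁻ x in {x | 1 ≤ |u x|}ᶜ, ENNReal.ofReal (|u x| ^ r) ∂μ ≤ 1 :=
    (setLIntegral_mono' hone.compl fun x hx => ENNReal.ofReal_le_ofReal
      (rpow_le_rpow_of_exponent_ge' (abs_nonneg _) (not_le.1 (show ¬1 ≤ |u x| from hx)).le hp
        (by nlinarith))).trans ((setLIntegral_le_lintegral _ _).trans hP)
  rw [← lintegral_add_compl _ hone, add_comm]
  exact add_le_add hsmall
    (setLIntegral_one_le_abs_rpow_le_of_controlsLevelSets hI hIint hu hP hp hc hθ0 hθ1 hr)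

end LevelSets

section Interpolation

variable {X : Type*} [MeasurableSpace X] {μ : Measure X} {u : X → ℝ} {p q r : ℝ}

theorem lintegral_rpow_le_add (hu : Measurable u) (hp : 0 ≤ p) (hpq : p ≤ q) (hqr : q ≤ r) :
    ∫⁻ x, ENNReal.ofReal (|u x| ^ q) ∂μ ≤
      ∫⁻ x, ENNReal.ofReal (|u x| ^ p) ∂μ + ∫⁻ x, ENNReal.ofReal (|u x| ^ r) ∂μ := by
  rw [← lintegral_add_left (by fun_prop)]
  refine lintegral_mono fun x => ?_
  rw [← ENNReal.ofReal_add (by positivity) (by positivity)]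
  refine ENNReal.ofReal_le_ofReal ?_
  rcases le_total |u x| 1 with hx | hx
  · linarith [rpow_le_rpow_of_exponent_ge' (abs_nonneg (u x)) hx hp hpq,
      rpow_nonneg (abs_nonneg (u x)) r]
  · linarith [rpow_le_rpow_of_exponent_le hx hqr, rpow_nonneg (abs_nonneg (u x)) p]

end Interpolation

section HaarMeasure

variable {E : Type*} [NormedAddCommGroup E] [NormedSpace ℝ E] [MeasurableSpace E] (μ : Measure E)

theorem controlsLevelSets_gagliardo {s p κ : ℝ} (hp : 0 ≤ p) {u : E → ℝ} (hu : Measurable u)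
    (hκ : ∀ (x : E) (F : Set E), ENNReal.ofReal (κ * (μ F).toReal ^ (-(s * p / finrank ℝ E))) ≤
      ∫⁻ y in Fᶜ, ENNReal.ofReal (1 / ‖x - y‖ ^ ((finrank ℝ E : ℝ) + s * p)) ∂μ) :
    ControlsLevelSets μ p (s * p / finrank ℝ E) κ u fun x =>
      ∫⁻ y, ENNReal.ofReal (|u x - u y| ^ p / ‖x - y‖ ^ ((finrank ℝ E : ℝ) + s * p)) ∂μ := by
  intro t ht x hx
  set F := {y | t ≤ |u y|}
  set σ : ℝ := (finrank ℝ E : ℝ) + s * p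
  calc ENNReal.ofReal (κ * t ^ p * (μ F).toReal ^ (-(s * p / finrank ℝ E)))
      = ENNReal.ofReal (t ^ p) * ENNReal.ofReal (κ * (μ F).toReal ^ (-(s * p / finrank ℝ E))) := by
        rw [← ENNReal.ofReal_mul (by positivity)]
        ring_nf
    _ ≤ ENNReal.ofReal (t ^ p) * ∫⁻ y in Fᶜ, ENNReal.ofReal (1 / ‖x - y‖ ^ σ) ∂μ := by
        gcongr
        exact hκ x F
    _ = ∫⁻ y in Fᶜ, ENNReal.ofReal (t ^ p / ‖x - y‖ ^ σ) ∂μ := by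
        rw [← lintegral_const_mul' _ _ ENNReal.ofReal_ne_top]
        simp_rw [← ENNReal.ofReal_mul (rpow_nonneg ht.le p), mul_one_div]
    _ ≤ ∫⁻ y in Fᶜ, ENNReal.ofReal (|u x - u y| ^ p / ‖x - y‖ ^ σ) ∂μ := by
        refine setLIntegral_mono' (measurableSet_le measurable_const hu.abs).compl fun y hy => ?_
        have hy : |u y| < t := not_le.1 hy
        have : t ≤ |u x - u y| := by linarith [abs_sub_abs_le_abs_sub (u x) (u y)]
        gcongr
    _ ≤ _ := setLIntegral_le_lintegral _ _

variable [FiniteDimensional ℝ E] [Nontrivial E] [BorelSpace E] [μ.IsAddHaarMeasure]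

theorem ofReal_mul_measure_ball_diff_le_setLIntegral_compl (x : E) (F : Set E) {R β : ℝ}
    (hβ : 0 ≤ β) :
    ENNReal.ofReal (1 / R ^ β) * μ (ball x R \ F) ≤
      ∫⁻ y in Fᶜ, ENNReal.ofReal (1 / ‖x - y‖ ^ β) ∂μ := by
  rw [← setLIntegral_const]
  refine (setLIntegral_mono_ae (Measurable.aemeasurable (by fun_prop)) ?_).trans
    (lintegral_mono_set fun y hy => hy.2)
  filter_upwards [Measure.ae_ne μ x] with y hyx hy
  have hxy : 0 < ‖x - y‖ := norm_pos_iff.2 (sub_ne_zero.2 hyx.symm)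
  have hyR : ‖x - y‖ < R := by simpa [dist_eq_norm, norm_sub_rev] using hy.1
  exact ENNReal.ofReal_le_ofReal
    (one_div_le_one_div_of_le (by positivity) (rpow_le_rpow hxy.le hyR.le hβ))

theorem exists_ofReal_mul_rpow_le_setLIntegral_compl {α : ℝ} (hα : 0 < α) :
    ∃ κ > 0, ∀ (x : E) (F : Set E),
      ENNReal.ofReal (κ * (μ F).toReal ^ (-(α / finrank ℝ E))) ≤
        ∫⁻ y in Fᶜ, ENNReal.ofReal (1 / ‖x - y‖ ^ ((finrank ℝ E : ℝ) + α)) ∂μ := by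
  set d : ℝ := (finrank ℝ E : ℝ)
  have hd : 0 < d := Nat.cast_pos.2 finrank_pos
  set ω := (μ (ball (0 : E) 1)).toReal
  have hω : 0 < ω := ENNReal.toReal_pos (measure_ball_pos μ _ one_pos).ne' measure_ball_lt_top.ne
  refine ⟨(2 / ω) ^ (-((d + α) / d)), by positivity, fun x F => ?_⟩
  rcases (ENNReal.toReal_nonneg : 0 ≤ (μ F).toReal).eq_or_lt with hv | hv
  · rw [← hv, zero_rpow (neg_ne_zero.2 (by positivity)), mul_zero, ENNReal.ofReal_zero]
    exact zero_le
  have hF : μ F = ENNReal.ofReal (μ F).toReal :=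
    (ENNReal.ofReal_toReal (ENNReal.toReal_pos_iff.1 hv).2.ne).symm
  set v := (μ F).toReal
  set R := (2 * v / ω) ^ (1 / d)
  have hR : 0 < R := by positivity
  have hball : μ (ball x R) = 2 * μ F := by
    rw [Measure.addHaar_ball_of_pos μ x hR, ← rpow_natCast, ← rpow_mul (by positivity),
      one_div_mul_cancel hd.ne', rpow_one, ← ENNReal.ofReal_toReal measure_ball_lt_top.ne,
      ← ENNReal.ofReal_mul (by positivity), div_mul_cancel₀ _ hω.ne',
      ENNReal.ofReal_mul zero_le_two, ← hF]
    simp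
  have hout : μ F ≤ μ (ball x R \ F) := by
    refine le_trans ?_ le_measure_sdiff
    rw [hball, two_mul, ENNReal.add_sub_cancel_right (hF ▸ ENNReal.ofReal_ne_top)]
  have hRpow : R ^ (d + α) = (2 / ω) ^ ((d + α) / d) * v ^ ((d + α) / d) := by
    rw [← rpow_mul (by positivity), ← mul_rpow (by positivity) hv.le, div_mul_eq_mul_div,
      one_mul, mul_div_right_comm]
  calc ENNReal.ofReal ((2 / ω) ^ (-((d + α) / d)) * v ^ (-(α / d)))
      = ENNReal.ofReal (1 / R ^ (d + α)) * μ F := by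
        rw [hF, ← ENNReal.ofReal_mul (by positivity),
          show -(α / d) = -((d + α) / d) + 1 by field_simp; ring, rpow_add_one hv.ne', hRpow,
          rpow_neg (by positivity), rpow_neg hv.le]
        field_simp
    _ ≤ ENNReal.ofReal (1 / R ^ (d + α)) * μ (ball x R \ F) := by gcongr
    _ ≤ _ := ofReal_mul_measure_ball_diff_le_setLIntegral_compl μ x F (by positivity)

theorem exists_lintegral_rpow_le_of_gagliardo_le_one {s p q : ℝ} (hs : 0 < s) (hp : 0 < p)
    (hsp : s * p < finrank ℝ E) (hpq : p ≤ q)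
    (hq : q ≤ finrank ℝ E * p / (finrank ℝ E - s * p)) :
    ∃ C > 0, ∀ u : E → ℝ, Measurable u → ∫⁻ x, ENNReal.ofReal (|u x| ^ p) ∂μ ≤ 1 →
      ∫⁻ x, ∫⁻ y, ENNReal.ofReal (|u x - u y| ^ p / ‖x - y‖ ^ ((finrank ℝ E : ℝ) + s * p)) ∂μ ∂μ
        ≤ 1 →
      ∫⁻ x, ENNReal.ofReal (|u x| ^ q) ∂μ ≤ ENNReal.ofReal C := by
  set d : ℝ := (finrank ℝ E : ℝ)
  have hd : 0 < d := Nat.cast_pos.2 finrank_pos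
  obtain ⟨κ, hκ, hkernel⟩ := exists_ofReal_mul_rpow_le_setLIntegral_compl μ (mul_pos hs hp)
  set θ := s * p / d
  set r := d * p / (d - s * p)
  have hθ1 : θ < 1 := (div_lt_one hd).2 hsp
  have hr : r * (1 - θ) = p := by
    simp only [r, θ]
    rw [one_sub_div hd.ne', div_mul_div_comm, mul_right_comm, mul_comm d]
    exact mul_div_cancel_left₀ p (mul_ne_zero (sub_pos.2 hsp).ne' hd.ne')
  set K := 1 + ENNReal.ofReal (4 ^ r / κ) * max 1 (ENNReal.ofReal (2 ^ r / κ) ^ (1 / (1 - θ))) ^ θ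
  have hK : K ≠ ⊤ := by finiteness
  refine ⟨1 + K.toReal, by positivity, fun u hu hP hG => ?_⟩
  calc ∫⁻ x, ENNReal.ofReal (|u x| ^ q) ∂μ
      ≤ ∫⁻ x, ENNReal.ofReal (|u x| ^ p) ∂μ + ∫⁻ x, ENNReal.ofReal (|u x| ^ r) ∂μ :=
        lintegral_rpow_le_add hu hp.le hpq hq
    _ ≤ 1 + K := add_le_add hP (lintegral_rpow_le_of_controlsLevelSets
        (controlsLevelSets_gagliardo μ hp.le hu hkernel) hG hu hP hp.le hκ (by positivity) hθ1 hr)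
    _ = ENNReal.ofReal (1 + K.toReal) := by
        rw [ENNReal.ofReal_add zero_le_one ENNReal.toReal_nonneg, ENNReal.ofReal_one,
          ENNReal.ofReal_toReal hK]

end HaarMeasure

section Scaling

variable {X : Type*} [MeasurableSpace X] {μ : Measure X}

theorem lintegral_ofReal_abs_const_mul_rpow (u : X → ℝ) {a r : ℝ} (ha : 0 ≤ a) :
    ∫⁻ x, ENNReal.ofReal (|a * u x| ^ r) ∂μ =
      ENNReal.ofReal (a ^ r) * ∫⁻ x, ENNReal.ofReal (|u x| ^ r) ∂μ := by
  rw [← lintegral_const_mul' _ _ ENNReal.ofReal_ne_top]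
  simp_rw [abs_mul, abs_of_nonneg ha, mul_rpow ha (abs_nonneg _),
    ENNReal.ofReal_mul (rpow_nonneg ha _)]

theorem eLpNorm_ofReal_eq_lintegral_rpow (u : X → ℝ) {q : ℝ} (hq : 0 < q) :
    eLpNorm u (ENNReal.ofReal q) μ = (∫⁻ x, ENNReal.ofReal (|u x| ^ q) ∂μ) ^ (1 / q) := by
  rw [eLpNorm_eq_lintegral_rpow_enorm_toReal (by simpa using hq) ENNReal.ofReal_ne_top,
    ENNReal.toReal_ofReal hq.le]
  simp_rw [Real.enorm_eq_ofReal_abs, ENNReal.ofReal_rpow_of_nonneg (abs_nonneg _) hq.le]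

theorem eLpNorm_eq_zero_of_lintegral_rpow_eq_zero {u : X → ℝ} (hu : Measurable u) {p q : ℝ}
    (hp : 0 < p) (hq : 0 < q) (hP : ∫⁻ x, ENNReal.ofReal (|u x| ^ p) ∂μ = 0) :
    eLpNorm u (ENNReal.ofReal q) μ = 0 := by
  refine (eLpNorm_eq_zero_iff hu.aestronglyMeasurable (ENNReal.ofReal_pos.2 hq).ne').2
    ((eLpNorm_eq_zero_iff hu.aestronglyMeasurable (ENNReal.ofReal_pos.2 hp).ne').1 ?_)
  rw [eLpNorm_ofReal_eq_lintegral_rpow u hp, hP, ENNReal.zero_rpow_of_pos (one_div_pos.2 hp)]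

theorem _root_.MeasureTheory.MemLp.lintegral_ofReal_abs_rpow_ne_top {u : X → ℝ} {p : ℝ} (hp : 0 < p)
    (hu : MemLp u (ENNReal.ofReal p) μ) : ∫⁻ x, ENNReal.ofReal (|u x| ^ p) ∂μ ≠ ⊤ := by
  have h := hu.eLpNorm_lt_top
  rw [eLpNorm_ofReal_eq_lintegral_rpow u hp, ENNReal.rpow_lt_top_iff_of_pos (by positivity)] at h
  exact h.ne

theorem gagliardoP_const_mul (n : ℕ) (s p : ℝ) (u : EuclideanSpace ℝ (Fin n) → ℝ) {a : ℝ}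
    (ha : 0 ≤ a) :
    gagliardoP n s p (fun x => a * u x) = ENNReal.ofReal (a ^ p) * gagliardoP n s p u := by
  simp_rw [gagliardoP, ← lintegral_const_mul' _ _ ENNReal.ofReal_ne_top, ← mul_sub, abs_mul,
    abs_of_nonneg ha, mul_rpow ha (abs_nonneg _), mul_div_assoc,
    ENNReal.ofReal_mul (rpow_nonneg ha _)]

end Scaling

theorem eLpNorm_le_of_forall_gagliardoP_le_one {n : ℕ} {s p q C : ℝ} (hp : 0 < p) (hq : 0 < q)
    (hC : ∀ v : EuclideanSpace ℝ (Fin n) → ℝ, Measurable v →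
      ∫⁻ x, ENNReal.ofReal (|v x| ^ p) ≤ 1 → gagliardoP n s p v ≤ 1 →
      ∫⁻ x, ENNReal.ofReal (|v x| ^ q) ≤ ENNReal.ofReal C)
    {u : EuclideanSpace ℝ (Fin n) → ℝ} (hu : Measurable u)
    (hK : (∫⁻ x, ENNReal.ofReal (|u x| ^ p)) + gagliardoP n s p u ≠ ⊤) :
    eLpNorm u (ENNReal.ofReal q) volume ≤
      ENNReal.ofReal C ^ (1 / q) *
        ((∫⁻ x, ENNReal.ofReal (|u x| ^ p)) + gagliardoP n s p u) ^ (1 / p) := by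
  set P := ∫⁻ x, ENNReal.ofReal (|u x| ^ p)
  set G := gagliardoP n s p u
  rcases eq_or_ne (P + G) 0 with hK0 | hK0
  · rw [eLpNorm_eq_zero_of_lintegral_rpow_eq_zero hu hp hq (add_eq_zero.1 hK0).1]
    exact zero_le
  have hk : 0 < (P + G).toReal := ENNReal.toReal_pos hK0 hK
  set t := (P + G).toReal ^ (-(1 / p)) with htdef
  have ht : 0 < t := by positivity
  have htK : ENNReal.ofReal (t ^ p) * (P + G) = 1 := by
    rw [← ENNReal.ofReal_toReal hK, ← ENNReal.ofReal_mul (by positivity), ← rpow_mul hk.le,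
      neg_mul, one_div_mul_cancel hp.ne', rpow_neg_one, inv_mul_cancel₀ hk.ne', ENNReal.ofReal_one]
  have hscaled := hC (fun x => t * u x) (by fun_prop)
    (by rw [lintegral_ofReal_abs_const_mul_rpow u ht.le, ← htK]
        exact mul_le_mul_right le_self_add _)
    (by rw [gagliardoP_const_mul n s p u ht.le, ← htK]; exact mul_le_mul_right le_add_self _)
  have htu :
      ENNReal.ofReal t * eLpNorm u (ENNReal.ofReal q) volume ≤ ENNReal.ofReal C ^ (1 / q) := by
    rw [← Real.enorm_of_nonneg ht.le, ← eLpNorm_const_smul, eLpNorm_ofReal_eq_lintegral_rpow _ hq]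
    exact ENNReal.rpow_le_rpow hscaled (by positivity)
  have htK' : (P + G) ^ (1 / p) = (ENNReal.ofReal t)⁻¹ := by
    rw [← ENNReal.ofReal_toReal hK, ENNReal.ofReal_rpow_of_nonneg hk.le (by positivity),
      ← ENNReal.ofReal_inv_of_pos ht, htdef, rpow_neg hk.le, inv_inv]
  calc eLpNorm u (ENNReal.ofReal q) volume
      = (ENNReal.ofReal t)⁻¹ * (ENNReal.ofReal t * eLpNorm u (ENNReal.ofReal q) volume) := by
        rw [← mul_assoc, ENNReal.inv_mul_cancel (by simpa using ht) ENNReal.ofReal_ne_top, one_mul]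
    _ ≤ _ := by
        rw [htK', mul_comm]
        exact mul_le_mul_left htu _

end FractionalSobolev

open FractionalSobolev

theorem fractional_sobolev_embedding_general
    (n : ℕ) (s p q : ℝ) (hs0 : 0 < s) (hp : 1 ≤ p)
    (hsp : s * p < n) (hq1 : p ≤ q) (hq2 : q ≤ n * p / (n - s * p)) :
    ∃ C > (0:ℝ), ∀ u : EuclideanSpace ℝ (Fin n) → ℝ, Measurable u →
      MemLp u (ENNReal.ofReal p) → gagliardoP n s p u < ⊤ →
      MemLp u (ENNReal.ofReal q) ∧
      (eLpNorm u (ENNReal.ofReal q) volume).toReal ≤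
        C * ((∫ x, |u x| ^ p) + (gagliardoP n s p u).toReal) ^ (1 / p) := by
  have hp0 : 0 < p := by linarith
  have hn : 0 < finrank ℝ (EuclideanSpace ℝ (Fin n)) := by
    simpa using (mul_pos hs0 hp0).trans hsp
  have : Nontrivial (EuclideanSpace ℝ (Fin n)) := Module.nontrivial_of_finrank_pos hn
  obtain ⟨C, hC, hnormalized⟩ := exists_lintegral_rpow_le_of_gagliardo_le_one
    (volume : Measure (EuclideanSpace ℝ (Fin n))) hs0 hp0 (by simpa using hsp) hq1
    (by simpa using hq2)
  refine ⟨C ^ (1 / q), by positivity, fun u hu hLp hG => ?_⟩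
  have hP : ∫⁻ x, ENNReal.ofReal (|u x| ^ p) ≠ ⊤ := hLp.lintegral_ofReal_abs_rpow_ne_top hp0
  have hLq := eLpNorm_le_of_forall_gagliardoP_le_one hp0 (by linarith)
    (fun v hv h1 h2 => hnormalized v hv h1 (by simpa [gagliardoP] using h2)) hu
    (ENNReal.add_ne_top.2 ⟨hP, hG.ne⟩)
  refine ⟨⟨hu.aestronglyMeasurable, hLq.trans_lt (by finiteness)⟩, ?_⟩
  have hint : ∫ x, |u x| ^ p = (∫⁻ x, ENNReal.ofReal (|u x| ^ p)).toReal :=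
    integral_eq_lintegral_of_nonneg_ae (ae_of_all _ fun x => by positivity)
      (hu.abs.pow_const p).aestronglyMeasurable
  calc (eLpNorm u (ENNReal.ofReal q) volume).toReal
      ≤ (ENNReal.ofReal C ^ (1 / q) *
          ((∫⁻ x, ENNReal.ofReal (|u x| ^ p)) + gagliardoP n s p u) ^ (1 / p)).toReal :=
        ENNReal.toReal_mono (by finiteness) hLq
    _ = _ := by
        rw [ENNReal.toReal_mul, ← ENNReal.toReal_rpow, ← ENNReal.toReal_rpow,
          ENNReal.toReal_ofReal hC.le, ENNReal.toReal_add hP hG.ne, hint]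

/-- continuous embedding `W^{s,p}(ℝ^n) ↪ L^q(ℝ^n)` for `q ∈ [p, p_s^*]`. -/
theorem fractional_sobolev_embedding
    (n : ℕ) (s p q : ℝ) (hn : 1 ≤ n) (hs0 : 0 < s) (hs1 : s < 1) (hp : 1 ≤ p)
    (hsp : s * p < n) (hq1 : p ≤ q) (hq2 : q ≤ n * p / (n - s * p)) :
    ∃ C > (0:ℝ), ∀ u : EuclideanSpace ℝ (Fin n) → ℝ, Measurable u →
      MemLp u (ENNReal.ofReal p) → gagliardoP n s p u < ⊤ →
      MemLp u (ENNReal.ofReal q) ∧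
      (eLpNorm u (ENNReal.ofReal q) volume).toReal ≤
        C * ((∫ x, |u x| ^ p) + (gagliardoP n s p u).toReal) ^ (1 / p) :=
  fractional_sobolev_embedding_general n s p q hs0 hp hsp hq1 hq2
end

section
/- Let n ≥ 1, p ≥ 2, 0 < s < 1, and let V : ℝ^n → ℝ be continuous with V ≥ 0. Then for any u, v ∈ X^s it holds that ⟨A(u) − A(v), u − v⟩ ≥ (‖u‖_{X^s}^{p−1} − ‖v‖_{X^s}^{p−1})(‖u‖_{X^s} − ‖v‖_{X^s}), where ⟨A(u) − A(v), u − v⟩ = ⟨A(u), u − v⟩ − ⟨A(v), u − v⟩. -/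
open MeasureTheory Real Filter
open scoped ENNReal NNReal

/-!
Both parts of `⟨A(u), v⟩` are integrals of `w |f|^{p-2} f g` against a nonnegative weight `w`:
the Gagliardo part on `ℝⁿ × ℝⁿ` with `w = ‖x - y‖^{-(n+sp)}` and `f, g` the increments
`u(x) - u(y)`, `v(x) - v(y)`, the potential part with `w = V`. Pointwise
`|w |f|^{p-2} f g| = (w |f|^p)^{(p-1)/p} (w |g|^p)^{1/p}`, so Hölder's inequality for each part,
followed by the two-term discrete Hölder inequality, gives `⟨A(u), v⟩ ≤ ‖u‖^{p-1} ‖v‖`.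
Since `⟨A(u), u⟩ = ‖u‖^p`, expanding `⟨A(u) - A(v), u - v⟩` and bounding the two cross terms
`⟨A(u), v⟩`, `⟨A(v), u⟩` this way gives `‖u‖^p + ‖v‖^p - ‖u‖^{p-1}‖v‖ - ‖v‖^{p-1}‖u‖`,
which factors as the right-hand side.
-/

namespace MeasureTheory

variable {X : Type*} [MeasurableSpace X] {μ : Measure X} {a b : ℝ} {F G : X → ℝ}

theorem lintegral_ofReal_rpow_mul_rpow_le (ha : 0 ≤ a) (hb : 0 ≤ b) (hab : a + b = 1)
    (hF : AEMeasurable F μ) (hG : AEMeasurable G μ) (hF0 : 0 ≤ F) (hG0 : 0 ≤ G) :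
    ∫⁻ x, ENNReal.ofReal (F x ^ a * G x ^ b) ∂μ ≤
      (∫⁻ x, ENNReal.ofReal (F x) ∂μ) ^ a * (∫⁻ x, ENNReal.ofReal (G x) ∂μ) ^ b := by
  have hpt (x : X) : ENNReal.ofReal (F x ^ a * G x ^ b) =
      ENNReal.ofReal (F x) ^ a * ENNReal.ofReal (G x) ^ b := by
    rw [ENNReal.ofReal_mul (rpow_nonneg (hF0 x) a), ENNReal.ofReal_rpow_of_nonneg (hF0 x) ha,
      ENNReal.ofReal_rpow_of_nonneg (hG0 x) hb]
  simp_rw [hpt]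
  exact ENNReal.lintegral_mul_norm_pow_le hF.ennreal_ofReal hG.ennreal_ofReal ha hb hab

theorem Integrable.rpow_mul_rpow (ha : 0 ≤ a) (hb : 0 ≤ b) (hab : a + b = 1)
    (hF : Integrable F μ) (hG : Integrable G μ) (hF0 : 0 ≤ F) (hG0 : 0 ≤ G) :
    Integrable (fun x => F x ^ a * G x ^ b) μ := by
  have hmeas : AEStronglyMeasurable (fun x => F x ^ a * G x ^ b) μ :=
    ((hF.aemeasurable.pow_const a).mul (hG.aemeasurable.pow_const b)).aestronglyMeasurable
  refine (lintegral_ofReal_ne_top_iff_integrable hmeas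
    (ae_of_all _ fun x => mul_nonneg (rpow_nonneg (hF0 x) a) (rpow_nonneg (hG0 x) b))).mp ?_
  refine ne_top_of_le_ne_top ?_ (lintegral_ofReal_rpow_mul_rpow_le ha hb hab hF.aemeasurable
    hG.aemeasurable hF0 hG0)
  exact ENNReal.mul_ne_top (ENNReal.rpow_ne_top_of_nonneg ha hF.lintegral_lt_top.ne)
    (ENNReal.rpow_ne_top_of_nonneg hb hG.lintegral_lt_top.ne)

theorem integral_rpow_mul_rpow_le (ha : 0 ≤ a) (hb : 0 ≤ b) (hab : a + b = 1)
    (hF : Integrable F μ) (hG : Integrable G μ) (hF0 : 0 ≤ F) (hG0 : 0 ≤ G) :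
    ∫ x, F x ^ a * G x ^ b ∂μ ≤ (∫ x, F x ∂μ) ^ a * (∫ x, G x ∂μ) ^ b := by
  have hFG0 : 0 ≤ fun x => F x ^ a * G x ^ b := fun x =>
    mul_nonneg (rpow_nonneg (hF0 x) a) (rpow_nonneg (hG0 x) b)
  have hIF0 := rpow_nonneg (integral_nonneg hF0 (μ := μ)) a
  have hIG0 := rpow_nonneg (integral_nonneg hG0 (μ := μ)) b
  rw [← ENNReal.ofReal_le_ofReal_iff (mul_nonneg hIF0 hIG0),
    ofReal_integral_eq_lintegral_ofReal (hF.rpow_mul_rpow ha hb hab hG hF0 hG0) (ae_of_all _ hFG0),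
    ENNReal.ofReal_mul hIF0, ← ENNReal.ofReal_rpow_of_nonneg (integral_nonneg hF0) ha,
    ← ENNReal.ofReal_rpow_of_nonneg (integral_nonneg hG0) hb,
    ofReal_integral_eq_lintegral_ofReal hF (ae_of_all _ hF0),
    ofReal_integral_eq_lintegral_ofReal hG (ae_of_all _ hG0)]
  exact lintegral_ofReal_rpow_mul_rpow_le ha hb hab hF.aemeasurable hG.aemeasurable hF0 hG0

end MeasureTheory

theorem rpow_mul_rpow_add_rpow_mul_rpow_le {a b x₁ x₂ y₁ y₂ : ℝ} (ha : 0 ≤ a) (hb : 0 ≤ b)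
    (hab : a + b = 1) (hx₁ : 0 ≤ x₁) (hx₂ : 0 ≤ x₂) (hy₁ : 0 ≤ y₁) (hy₂ : 0 ≤ y₂) :
    x₁ ^ a * y₁ ^ b + x₂ ^ a * y₂ ^ b ≤ (x₁ + x₂) ^ a * (y₁ + y₂) ^ b := by
  have two_point := integral_rpow_mul_rpow_le (μ := Measure.count) (F := ![x₁, x₂])
    (G := ![y₁, y₂]) ha hb hab .of_finite .of_finite (fun i => by fin_cases i <;> assumption)
    (fun i => by fin_cases i <;> assumption)
  simpa [integral_fintype .of_finite] using two_point

theorem abs_rpow_sub_two_mul_self {p : ℝ} (hp : p ≠ 0) (t : ℝ) :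
    |t| ^ (p - 2) * t * t = |t| ^ p := by
  rw [mul_assoc, ← abs_mul_abs_self, ← sq, ← rpow_two,
    ← rpow_add' (abs_nonneg t) (by simpa using hp)]
  ring_nf

theorem holder_exponents_of_one_lt {p : ℝ} (hp : 1 < p) :
    0 ≤ (p - 1) / p ∧ 0 ≤ 1 / p ∧ (p - 1) / p + 1 / p = 1 := by
  refine ⟨by apply div_nonneg <;> linarith, by positivity, ?_⟩
  rw [← add_div, sub_add_cancel, div_self (by positivity)]

theorem abs_mul_abs_rpow_sub_two_mul_mul {p c : ℝ} (hp : 1 < p) (hc : 0 ≤ c) (t r : ℝ) :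
    |c * |t| ^ (p - 2) * t * r| = (c * |t| ^ p) ^ ((p - 1) / p) * (c * |r| ^ p) ^ (1 / p) := by
  have hp0 : p ≠ 0 := by linarith
  obtain ⟨-, -, hsum⟩ := holder_exponents_of_one_lt hp
  have hc_split : c = c ^ ((p - 1) / p) * c ^ (1 / p) := by
    rw [← rpow_add' hc (by rw [hsum]; norm_num), hsum, rpow_one]
  have ht : |t| ^ (p - 2) * |t| = (|t| ^ p) ^ ((p - 1) / p) := by
    rw [← rpow_mul (abs_nonneg t), mul_div_cancel₀ _ hp0]
    nth_rw 2 [← rpow_one |t|]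
    rw [← rpow_add' (abs_nonneg t) (by linarith)]
    ring_nf
  have hr : |r| = (|r| ^ p) ^ (1 / p) := by
    rw [← rpow_mul (abs_nonneg r), mul_one_div_cancel hp0, rpow_one]
  rw [abs_mul, abs_mul, abs_mul, abs_of_nonneg hc, abs_of_nonneg (rpow_nonneg (abs_nonneg t) _),
    mul_rpow hc (rpow_nonneg (abs_nonneg t) _), mul_rpow hc (rpow_nonneg (abs_nonneg r) _),
    ← ht, ← hr]
  nth_rw 1 [hc_split]
  ring

section WeightedPairing

variable {X : Type*} {p : ℝ} {w f g : X → ℝ}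

theorem weight_mul_abs_rpow_nonneg (hw0 : 0 ≤ w) : 0 ≤ fun x => w x * |f x| ^ p := fun x =>
  mul_nonneg (hw0 x) (rpow_nonneg (abs_nonneg _) p)

variable [MeasurableSpace X] {μ : Measure X}

noncomputable def weightedPairing (μ : Measure X) (p : ℝ) (w f g : X → ℝ) : ℝ :=
  ∫ x, w x * |f x| ^ (p - 2) * f x * g x ∂μ

theorem weightedPairing_self (hp : p ≠ 0) :
    weightedPairing μ p w f f = ∫ x, w x * |f x| ^ p ∂μ := by
  refine integral_congr_ae (ae_of_all _ fun x => ?_)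
  simp only [mul_assoc, ← abs_rpow_sub_two_mul_self hp (f x)]

theorem integral_weight_mul_abs_rpow_nonneg (hw0 : 0 ≤ w) : 0 ≤ ∫ x, w x * |f x| ^ p ∂μ :=
  integral_nonneg (weight_mul_abs_rpow_nonneg hw0)

theorem integrable_weight_mul_abs_rpow_sub_two_mul_mul (hp : 1 < p) (hw : Measurable w)
    (hf : Measurable f) (hg : Measurable g) (hw0 : 0 ≤ w)
    (hfp : Integrable (fun x => w x * |f x| ^ p) μ)
    (hgp : Integrable (fun x => w x * |g x| ^ p) μ) :
    Integrable (fun x => w x * |f x| ^ (p - 2) * f x * g x) μ := by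
  obtain ⟨ha, hb, hab⟩ := holder_exponents_of_one_lt hp
  refine (hfp.rpow_mul_rpow ha hb hab hgp (weight_mul_abs_rpow_nonneg hw0)
    (weight_mul_abs_rpow_nonneg hw0)).mono' (by fun_prop) (ae_of_all _ fun x => ?_)
  exact (abs_mul_abs_rpow_sub_two_mul_mul hp (hw0 x) (f x) (g x)).le

theorem weightedPairing_le (hp : 1 < p) (hw : Measurable w)
    (hf : Measurable f) (hg : Measurable g) (hw0 : 0 ≤ w)
    (hfp : Integrable (fun x => w x * |f x| ^ p) μ)
    (hgp : Integrable (fun x => w x * |g x| ^ p) μ) :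
    weightedPairing μ p w f g ≤
      (∫ x, w x * |f x| ^ p ∂μ) ^ ((p - 1) / p) * (∫ x, w x * |g x| ^ p ∂μ) ^ (1 / p) := by
  obtain ⟨ha, hb, hab⟩ := holder_exponents_of_one_lt hp
  have hf0 : 0 ≤ fun x => w x * |f x| ^ p := weight_mul_abs_rpow_nonneg hw0
  have hg0 : 0 ≤ fun x => w x * |g x| ^ p := weight_mul_abs_rpow_nonneg hw0
  refine (integral_mono (integrable_weight_mul_abs_rpow_sub_two_mul_mul hp hw hf hg hw0 hfp hgp)
    (hfp.rpow_mul_rpow ha hb hab hgp hf0 hg0) fun x => ?_).trans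
    (integral_rpow_mul_rpow_le ha hb hab hfp hgp hf0 hg0)
  exact (le_abs_self _).trans (abs_mul_abs_rpow_sub_two_mul_mul hp (hw0 x) (f x) (g x)).le

theorem weightedPairing_sub_right {g₁ g₂ : X → ℝ}
    (h₁ : Integrable (fun x => w x * |f x| ^ (p - 2) * f x * g₁ x) μ)
    (h₂ : Integrable (fun x => w x * |f x| ^ (p - 2) * f x * g₂ x) μ) :
    weightedPairing μ p w f (g₁ - g₂) =
      weightedPairing μ p w f g₁ - weightedPairing μ p w f g₂ := by
  rw [weightedPairing, weightedPairing, weightedPairing, ← integral_sub h₁ h₂]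
  simp only [Pi.sub_apply, mul_sub]

end WeightedPairing

section FractionalPLaplacian

variable {n : ℕ} {s p : ℝ} {V u v w : EuclideanSpace ℝ (Fin n) → ℝ}

noncomputable def gagliardoWeight (n : ℕ) (s p : ℝ)
    (z : EuclideanSpace ℝ (Fin n) × EuclideanSpace ℝ (Fin n)) : ℝ :=
  (‖z.1 - z.2‖ ^ ((n : ℝ) + s * p))⁻¹

def pairDiff (u : EuclideanSpace ℝ (Fin n) → ℝ)
    (z : EuclideanSpace ℝ (Fin n) × EuclideanSpace ℝ (Fin n)) : ℝ :=
  u z.1 - u z.2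

@[fun_prop]
theorem measurable_gagliardoWeight : Measurable (gagliardoWeight n s p) := by
  unfold gagliardoWeight; fun_prop

theorem gagliardoWeight_nonneg : 0 ≤ gagliardoWeight n s p := fun _ =>
  inv_nonneg.2 (rpow_nonneg (norm_nonneg _) _)

@[fun_prop]
theorem Measurable.pairDiff (hu : Measurable u) : Measurable (pairDiff u) :=
  (hu.comp measurable_fst).sub (hu.comp measurable_snd)

theorem gagliardoP_eq_lintegral (hu : Measurable u) :
    gagliardoP n s p u =
      ∫⁻ z, ENNReal.ofReal (gagliardoWeight n s p z * |pairDiff u z| ^ p) := by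
  rw [Measure.volume_eq_prod, lintegral_prod _ (by fun_prop)]
  simp only [gagliardoP, gagliardoWeight, pairDiff, div_eq_inv_mul]

theorem toReal_gagliardoP (hu : Measurable u) :
    (gagliardoP n s p u).toReal = ∫ z, gagliardoWeight n s p z * |pairDiff u z| ^ p := by
  rw [gagliardoP_eq_lintegral hu, integral_eq_lintegral_of_nonneg_ae
    (ae_of_all _ (weight_mul_abs_rpow_nonneg gagliardoWeight_nonneg))
    (by fun_prop : Measurable _).aestronglyMeasurable]

theorem MemXs.integrable_gagliardo (hu : MemXs n s p V u) :
    Integrable fun z => gagliardoWeight n s p z * |pairDiff u z| ^ p := by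
  obtain ⟨hu_meas, -, hu_fin, -⟩ := hu
  refine (lintegral_ofReal_ne_top_iff_integrable (by fun_prop : Measurable _).aestronglyMeasurable
    (ae_of_all _ (weight_mul_abs_rpow_nonneg gagliardoWeight_nonneg))).mp ?_
  rw [← gagliardoP_eq_lintegral hu_meas]
  exact hu_fin.ne

theorem Apair_eq_weightedPairing_add
    (h : Integrable fun z =>
      gagliardoWeight n s p z * |pairDiff u z| ^ (p - 2) * pairDiff u z * pairDiff v z) :
    Apair n s p V u v =
      weightedPairing volume p (gagliardoWeight n s p) (pairDiff u) (pairDiff v) +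
        weightedPairing volume p V u v := by
  rw [Measure.volume_eq_prod] at h
  rw [weightedPairing, Measure.volume_eq_prod, integral_prod _ h]
  simp only [Apair, weightedPairing, gagliardoWeight, pairDiff, div_eq_inv_mul, mul_assoc]

theorem pairDiff_sub : pairDiff (v - w) = pairDiff v - pairDiff w := by
  ext z
  simp only [pairDiff, Pi.sub_apply]
  ring

theorem normXs_nonneg (hV0 : 0 ≤ V) : 0 ≤ normXs n s p V u :=
  rpow_nonneg (add_nonneg ENNReal.toReal_nonneg (integral_weight_mul_abs_rpow_nonneg hV0)) _

theorem MemXs.integrable_gagliardo_pairing (hp : 1 < p) (hu : MemXs n s p V u)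
    (hv : MemXs n s p V v) :
    Integrable fun z =>
      gagliardoWeight n s p z * |pairDiff u z| ^ (p - 2) * pairDiff u z * pairDiff v z :=
  integrable_weight_mul_abs_rpow_sub_two_mul_mul hp measurable_gagliardoWeight hu.1.pairDiff
    hv.1.pairDiff gagliardoWeight_nonneg hu.integrable_gagliardo hv.integrable_gagliardo

theorem MemXs.integrable_potential_pairing (hp : 1 < p) (hV : Measurable V) (hV0 : 0 ≤ V)
    (hu : MemXs n s p V u) (hv : MemXs n s p V v) :
    Integrable fun x => V x * |u x| ^ (p - 2) * u x * v x :=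
  integrable_weight_mul_abs_rpow_sub_two_mul_mul hp hV hu.1 hv.1 hV0 hu.2.2.2 hv.2.2.2

theorem Apair_sub_right (hp : 1 < p) (hV : Measurable V) (hV0 : 0 ≤ V) (hu : MemXs n s p V u)
    (hv : MemXs n s p V v) (hw : MemXs n s p V w) :
    Apair n s p V u (v - w) = Apair n s p V u v - Apair n s p V u w := by
  have hKv := hu.integrable_gagliardo_pairing hp hv
  have hKw := hu.integrable_gagliardo_pairing hp hw
  have hK : Integrable fun z => gagliardoWeight n s p z * |pairDiff u z| ^ (p - 2) *
      pairDiff u z * pairDiff (v - w) z := by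
    refine (hKv.sub hKw).congr (ae_of_all _ fun z => ?_)
    simp only [Pi.sub_apply, pairDiff_sub]
    ring
  rw [Apair_eq_weightedPairing_add hK, Apair_eq_weightedPairing_add hKv,
    Apair_eq_weightedPairing_add hKw, pairDiff_sub, weightedPairing_sub_right hKv hKw,
    weightedPairing_sub_right (hu.integrable_potential_pairing hp hV hV0 hv)
      (hu.integrable_potential_pairing hp hV hV0 hw)]
  ring

theorem Apair_self (hp : 1 < p) (hV0 : 0 ≤ V) (hu : MemXs n s p V u) :
    Apair n s p V u u = normXs n s p V u ^ p := by
  have hp0 : p ≠ 0 := by linarith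
  rw [Apair_eq_weightedPairing_add (hu.integrable_gagliardo_pairing hp hu),
    weightedPairing_self hp0, weightedPairing_self hp0, normXs, toReal_gagliardoP hu.1,
    ← rpow_mul (add_nonneg (integral_weight_mul_abs_rpow_nonneg gagliardoWeight_nonneg)
      (integral_weight_mul_abs_rpow_nonneg hV0)), one_div_mul_cancel hp0, rpow_one]

theorem Apair_le_normXs_rpow_mul_normXs (hp : 1 < p) (hV : Measurable V) (hV0 : 0 ≤ V)
    (hu : MemXs n s p V u) (hv : MemXs n s p V v) :
    Apair n s p V u v ≤ normXs n s p V u ^ (p - 1) * normXs n s p V v := by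
  obtain ⟨ha, hb, hab⟩ := holder_exponents_of_one_lt hp
  have hG0 (f : EuclideanSpace ℝ (Fin n) → ℝ) :
      0 ≤ ∫ z, gagliardoWeight n s p z * |pairDiff f z| ^ p :=
    integral_weight_mul_abs_rpow_nonneg gagliardoWeight_nonneg
  have hP0 (f : EuclideanSpace ℝ (Fin n) → ℝ) : 0 ≤ ∫ x, V x * |f x| ^ p :=
    integral_weight_mul_abs_rpow_nonneg hV0
  rw [Apair_eq_weightedPairing_add (hu.integrable_gagliardo_pairing hp hv), normXs, normXs,
    toReal_gagliardoP hu.1, toReal_gagliardoP hv.1, ← rpow_mul (add_nonneg (hG0 u) (hP0 u)),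
    one_div_mul_eq_div]
  calc _ ≤ _ := add_le_add
        (weightedPairing_le hp measurable_gagliardoWeight hu.1.pairDiff hv.1.pairDiff
          gagliardoWeight_nonneg hu.integrable_gagliardo hv.integrable_gagliardo)
        (weightedPairing_le hp hV hu.1 hv.1 hV0 hu.2.2.2 hv.2.2.2)
    _ ≤ _ := rpow_mul_rpow_add_rpow_mul_rpow_le ha hb hab (hG0 u) (hP0 u) (hG0 v) (hP0 v)

end FractionalPLaplacian

theorem Apair_monotonicity_general
    (n : ℕ) (s p : ℝ) (V : EuclideanSpace ℝ (Fin n) → ℝ)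
    (hp : 2 ≤ p)
    (hVc : Continuous V) (hV0 : ∀ x, 0 ≤ V x)
    (u v : EuclideanSpace ℝ (Fin n) → ℝ)
    (hu : MemXs n s p V u) (hv : MemXs n s p V v) :
    (normXs n s p V u ^ (p - 1) - normXs n s p V v ^ (p - 1)) *
        (normXs n s p V u - normXs n s p V v) ≤
      Apair n s p V u (u - v) - Apair n s p V v (u - v) := by
  have hp1 : 1 < p := by linarith
  have hV := hVc.measurable
  have hpow (w : EuclideanSpace ℝ (Fin n) → ℝ) :
      normXs n s p V w ^ p = normXs n s p V w ^ (p - 1) * normXs n s p V w := by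
    rw [← rpow_add_one' (normXs_nonneg hV0) (by linarith), sub_add_cancel]
  rw [Apair_sub_right hp1 hV hV0 hu hu hv, Apair_sub_right hp1 hV hV0 hv hu hv,
    Apair_self hp1 hV0 hu, Apair_self hp1 hV0 hv, hpow u, hpow v]
  linear_combination Apair_le_normXs_rpow_mul_normXs hp1 hV hV0 hu hv +
    Apair_le_normXs_rpow_mul_normXs hp1 hV hV0 hv hu

/-- monotonicity inequality for the operator `A`. -/
theorem Apair_monotonicity
    (n : ℕ) (s p : ℝ) (V : EuclideanSpace ℝ (Fin n) → ℝ)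
    (hn : 1 ≤ n) (hp : 2 ≤ p) (hs0 : 0 < s) (hs1 : s < 1)
    (hVc : Continuous V) (hV0 : ∀ x, 0 ≤ V x)
    (u v : EuclideanSpace ℝ (Fin n) → ℝ)
    (hu : MemXs n s p V u) (hv : MemXs n s p V v) :
    (normXs n s p V u ^ (p - 1) - normXs n s p V v ^ (p - 1)) *
        (normXs n s p V u - normXs n s p V v) ≤
      Apair n s p V u (u - v) - Apair n s p V v (u - v) :=
  Apair_monotonicity_general n s p V hp hVc hV0 u v hu hv
end

section
/- Let n ≥ 1, p > 1, and let f : ℝ^n × ℝ → ℝ be continuous with F(x,t) = ∫_0^t f(x,τ) dτ, and suppose that F(x,t)/|t|^p → +∞ as |t| → ∞ uniformly in x ∈ ℝ^n. Then for every φ ∈ C_c^∞(ℝ^n) which is not identically zero, lim_{|t|→∞} (1/|t|^p) ∫_{ℝ^n} F(x, tφ(x)) dx = +∞. -/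
open MeasureTheory Real Filter
open scoped ENNReal NNReal

set_option maxHeartbeats 2000000 in
/-- if `F(x,t)/|t|^p → +∞` uniformly in `x`, then for every nonzero test
function `φ`, `(1/|t|^p) ∫ F(x, tφ(x)) dx → +∞` as `|t| → ∞`. -/
theorem primitive_superlinear_integral
    (n : ℕ) (p : ℝ) (f : EuclideanSpace ℝ (Fin n) → ℝ → ℝ)
    (hn : 1 ≤ n) (hp : 1 < p)
    (hf : Continuous (Function.uncurry f))
    (hF : ∀ L : ℝ, ∃ T > (0:ℝ), ∀ x t, T ≤ |t| → L * |t| ^ p ≤ Fprim n f x t) :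
    ∀ φ : EuclideanSpace ℝ (Fin n) → ℝ, ContDiff ℝ (⊤ : ℕ∞) φ → HasCompactSupport φ → φ ≠ 0 →
      Tendsto (fun t : ℝ => (∫ x, Fprim n f x (t * φ x)) / |t| ^ p)
        (Filter.cocompact ℝ) atTop := by
  intro φ hφsm hφcs hφ0
  classical
  have hφcont : Continuous φ := hφsm.continuous
  have hFc : Continuous (fun q : EuclideanSpace ℝ (Fin n) × ℝ => Fprim n f q.1 q.2) := by
    unfold Fprim
    exact intervalIntegral.continuous_parametric_intervalIntegral_of_continuous
      (f := fun (q : EuclideanSpace ℝ (Fin n) × ℝ) τ => f q.1 τ)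
      (hf.comp (continuous_fst.fst.prodMk continuous_snd)) continuous_snd
  obtain ⟨x0, hx0⟩ : ∃ x, φ x ≠ 0 := by
    by_contra h; push_neg at h; exact hφ0 (funext fun x => h x)
  have hφx0 : 0 < |φ x0| := abs_pos.2 hx0
  set δ : ℝ := |φ x0| / 2 with hδdef
  have hδ : 0 < δ := by positivity
  set S : Set (EuclideanSpace ℝ (Fin n)) := {x | δ ≤ |φ x|} with hSdef
  set K := tsupport φ with hKdef
  have hKc : IsCompact K := hφcs
  have hSmeas : MeasurableSet S := (isClosed_le continuous_const hφcont.abs).measurableSet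
  have hKmeas : MeasurableSet K := (isClosed_tsupport φ).measurableSet
  have hSK : S ⊆ K := by
    intro x hx
    have hx' : δ ≤ |φ x| := hx
    refine subset_tsupport φ (Function.mem_support.2 fun h0 => ?_)
    rw [h0, abs_zero] at hx'; linarith
  have hμK_lt : volume K < ⊤ := hKc.measure_lt_top
  have hμS_lt : volume S < ⊤ := (measure_mono hSK).trans_lt hμK_lt
  have hμS_pos : 0 < volume S := by
    have hU : IsOpen {x : EuclideanSpace ℝ (Fin n) | δ < |φ x|} :=
      isOpen_lt continuous_const hφcont.abs
    have h1 : 0 < volume {x : EuclideanSpace ℝ (Fin n) | δ < |φ x|} :=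
      hU.measure_pos volume ⟨x0, by simp only [Set.mem_setOf_eq, hδdef]; linarith⟩
    refine h1.trans_le (measure_mono ?_)
    intro x hx
    exact (le_of_lt hx : δ ≤ |φ x|)
  set m := (volume S).toReal with hmdef
  have hm : 0 < m := ENNReal.toReal_pos hμS_pos.ne' hμS_lt.ne
  set MK := (volume K).toReal with hMKdef
  have hMK0 : 0 ≤ MK := ENNReal.toReal_nonneg
  have hzero : ∀ x, Fprim n f x 0 = 0 := fun x => intervalIntegral.integral_same
  have hsupp : ∀ t : ℝ, ∀ x ∉ K, Fprim n f x (t * φ x) = 0 := by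
    intro t x hx
    rw [image_eq_zero_of_notMem_tsupport hx, mul_zero, hzero]
  have hint : ∀ t : ℝ, Integrable (fun x => Fprim n f x (t * φ x)) := by
    intro t
    have h2 : Continuous (fun x : EuclideanSpace ℝ (Fin n) => (x, t * φ x)) :=
      continuous_id.prodMk (continuous_const.mul hφcont)
    have hc := hFc.comp h2
    exact hc.integrable_of_hasCompactSupport (HasCompactSupport.intro hKc (hsupp t))
  rw [tendsto_atTop]
  intro b
  have hδp : 0 < δ ^ p := rpow_pos_of_pos hδ p
  set L : ℝ := max 0 ((b + 1) / (δ ^ p * m)) with hLdef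
  have hL0 : 0 ≤ L := le_max_left _ _
  have hLb : b + 1 ≤ L * (δ ^ p * m) := by
    rcases le_or_gt (b + 1) 0 with h | h
    · exact h.trans (by positivity)
    · have h1 : (b + 1) / (δ ^ p * m) ≤ L := le_max_right _ _
      have h2 : (b + 1) / (δ ^ p * m) * (δ ^ p * m) ≤ L * (δ ^ p * m) :=
        mul_le_mul_of_nonneg_right h1 (by positivity)
      rwa [div_mul_cancel₀ _ (by positivity)] at h2
  obtain ⟨T, hT, hTF⟩ := hF L
  obtain ⟨C, hC⟩ := (hKc.prod (isCompact_Icc (a := -T) (b := T))).exists_bound_of_continuousOn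
    hf.continuousOn
  have hx0K : x0 ∈ K := subset_tsupport φ (Function.mem_support.2 hx0)
  have hC0 : 0 ≤ C :=
    le_trans (norm_nonneg _) (hC (x0, 0) ⟨hx0K, by constructor <;> simp <;> linarith⟩)
  have hCT : 0 ≤ C * T := mul_nonneg hC0 hT.le
  have hFbound : ∀ x ∈ K, ∀ s : ℝ, |s| ≤ T → |Fprim n f x s| ≤ C * T := by
    intro x hx s hs
    have habs := abs_le.1 hs
    have h1 : ‖∫ τ in (0:ℝ)..s, f x τ‖ ≤ C * |s - 0| := by
      apply intervalIntegral.norm_integral_le_of_norm_le_const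
      intro τ hτ
      refine hC (x, τ) ⟨hx, ?_⟩
      rcases Set.mem_uIoc.1 hτ with ⟨h1, h2⟩ | ⟨h1, h2⟩ <;>
        exact ⟨by linarith, by linarith⟩
    rw [Real.norm_eq_abs, sub_zero] at h1
    calc |Fprim n f x s| ≤ C * |s| := h1
      _ ≤ C * T := mul_le_mul_of_nonneg_left hs hC0
  have habs : Tendsto (fun t : ℝ => |t|) (cocompact ℝ) atTop := by
    exact (tendsto_norm_cocompact_atTop (E := ℝ)).congr fun t => Real.norm_eq_abs t
  have hpow : Tendsto (fun t : ℝ => |t| ^ p) (cocompact ℝ) atTop :=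
    (tendsto_rpow_atTop (by linarith)).comp habs
  have hquot : Tendsto (fun t : ℝ => L * δ ^ p * m - C * T * MK / |t| ^ p)
      (cocompact ℝ) (nhds (L * δ ^ p * m - 0)) :=
    tendsto_const_nhds.sub (tendsto_const_nhds.div_atTop hpow)
  rw [sub_zero] at hquot
  have hblt : b < L * δ ^ p * m := by
    have := hLb; rw [← mul_assoc] at this; linarith
  have e1 : ∀ᶠ t : ℝ in cocompact ℝ, b < L * δ ^ p * m - C * T * MK / |t| ^ p :=
    hquot.eventually (eventually_gt_nhds hblt)
  have e2 : ∀ᶠ t : ℝ in cocompact ℝ, T / δ ≤ |t| := habs.eventually_ge_atTop _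
  have e3 : ∀ᶠ t : ℝ in cocompact ℝ, 1 ≤ |t| := habs.eventually_ge_atTop 1
  filter_upwards [e1, e2, e3] with t h1 h2 h3
  have ht0 : 0 < |t| := lt_of_lt_of_le one_pos h3
  have htp : 0 < |t| ^ p := rpow_pos_of_pos ht0 p
  have hTδ : T ≤ δ * |t| := by
    rw [div_le_iff₀ hδ] at h2; linarith
  -- the comparison function
  set g : EuclideanSpace ℝ (Fin n) → ℝ := fun x =>
    S.indicator (fun _ => L * δ ^ p * |t| ^ p) x +
      (K \ S).indicator (fun _ => -(C * T)) x with hgdef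
  have hint1 : Integrable (S.indicator (fun _ => L * δ ^ p * |t| ^ p)) :=
    (integrable_indicator_iff hSmeas).2 (integrableOn_const hμS_lt.ne)
  have hint2 : Integrable ((K \ S).indicator (fun _ => -(C * T))) :=
    (integrable_indicator_iff (hKmeas.diff hSmeas)).2
      (integrableOn_const ((measure_mono Set.diff_subset).trans_lt hμK_lt).ne)
  have hgint : Integrable g := hint1.add hint2
  have hpt : ∀ x, g x ≤ Fprim n f x (t * φ x) := by
    intro x
    by_cases hxS : x ∈ S
    · have hxK : x ∈ K := hSK hxS
      have hg1 : g x = L * δ ^ p * |t| ^ p := by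
        simp [hgdef, Set.indicator_of_mem hxS,
          Set.indicator_of_notMem (fun h : x ∈ K \ S => h.2 hxS)]
      rw [hg1]
      have hδφ : δ ≤ |φ x| := hxS
      have habs1 : T ≤ |t * φ x| := by
        rw [abs_mul]
        calc T ≤ δ * |t| := hTδ
          _ ≤ |φ x| * |t| := mul_le_mul_of_nonneg_right hδφ ht0.le
          _ = |t| * |φ x| := mul_comm _ _
      refine le_trans ?_ (hTF x (t * φ x) habs1)
      rw [abs_mul, Real.mul_rpow (abs_nonneg t) (abs_nonneg (φ x))]
      have h5 : δ ^ p ≤ |φ x| ^ p := Real.rpow_le_rpow hδ.le hδφ (by linarith)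
      have h6 : L * δ ^ p ≤ L * |φ x| ^ p := mul_le_mul_of_nonneg_left h5 hL0
      calc L * δ ^ p * |t| ^ p ≤ L * |φ x| ^ p * |t| ^ p :=
            mul_le_mul_of_nonneg_right h6 htp.le
        _ = L * (|t| ^ p * |φ x| ^ p) := by ring
    · by_cases hxK : x ∈ K
      · have hxKS : x ∈ K \ S := ⟨hxK, hxS⟩
        have hg1 : g x = -(C * T) := by
          simp [hgdef, Set.indicator_of_notMem hxS, Set.indicator_of_mem hxKS]
        rw [hg1]
        by_cases hbig : T ≤ |t * φ x|
        · have h4 := hTF x (t * φ x) hbig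
          have h5 : (0:ℝ) ≤ L * |t * φ x| ^ p := by positivity
          linarith
        · push_neg at hbig
          have h4 := abs_le.1 (hFbound x hxK (t * φ x) hbig.le)
          linarith [h4.1]
      · have hg1 : g x = 0 := by
          simp [hgdef, Set.indicator_of_notMem hxS,
            Set.indicator_of_notMem (fun h : x ∈ K \ S => hxK h.1)]
        rw [hg1, hsupp t x hxK]
  have hIg : ∫ x, g x = L * δ ^ p * |t| ^ p * m + (-(C * T)) * (volume (K \ S)).toReal := by
    rw [hgdef]
    rw [integral_add hint1 hint2, integral_indicator_const _ hSmeas,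
      integral_indicator_const _ (hKmeas.diff hSmeas)]
    simp [smul_eq_mul, hmdef, Measure.real]; ring
  have hKS : (volume (K \ S)).toReal ≤ MK :=
    ENNReal.toReal_mono hμK_lt.ne (measure_mono Set.diff_subset)
  have hmain : L * δ ^ p * m * |t| ^ p - C * T * MK ≤ ∫ x, Fprim n f x (t * φ x) := by
    have h := integral_mono hgint (hint t) hpt
    rw [hIg] at h
    nlinarith [h, hKS, hCT]
  have hfin : L * δ ^ p * m - C * T * MK / |t| ^ p ≤
      (∫ x, Fprim n f x (t * φ x)) / |t| ^ p := by
    rw [le_div_iff₀ htp]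
    have heq : (L * δ ^ p * m - C * T * MK / |t| ^ p) * |t| ^ p =
        L * δ ^ p * m * |t| ^ p - C * T * MK := by
      field_simp
    rw [heq]; exact hmain
  linarith
end
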